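/- Let Ω ⊂ ℝ² be a bounded open set and Ω¹ = Ω × (−1/2, 1/2), with points x = (x', x₃). Let M, K₁, K₂ > 0, let Ā : Ω → M_{3×3}(ℝ) be measurable with ‖Ā(x')‖_F ≤ M and Ā(x') invertible with ‖Ā(x')⁻¹‖_F ≤ M, and let B ∈ L^∞(Ω¹; M_{3×3}(ℝ)) with ‖B‖_{L^∞} ≤ K₂. For h > 0 set A^h(x) = Ā(x') + h B(x). Then there exist constants h₀ > 0 and C > 0, depending only on M, K₁, K₂, such that for all 0 < h < h₀ and every F ∈ L²(Ω¹; M_{3×3}(ℝ)) with ‖F‖_{L²} ≤ K₁: A^h(x) is invertible for a.e. x, and ∫_{Ω¹} dist²(F(x) Ā(x')⁻¹, SO(3)) dx ≤ C ( h² + ∫_{Ω¹} dist²(F(x) A^h(x)⁻¹, SO(3)) dx ). -/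

import Mathlib

/-!
Write `A^h = Ā + hB`. Once `h M K₂ ≤ 1/2`, a Neumann-series argument makes `A^h` invertible with
`‖(A^h)⁻¹‖ ≤ 2M`, and the resolvent identity `Ā⁻¹ - (A^h)⁻¹ = Ā⁻¹ (hB) (A^h)⁻¹` shows that
`F Ā⁻¹` and `F (A^h)⁻¹` differ pointwise by at most `2hM²K₂‖F‖`. As `dist(·, SO(3))` is
1-Lipschitz, squaring and integrating gives the estimate with `C = 2 + 8M⁴K₂²K₁²`. All integrals
involved are finite because `Ω¹` is the preimage of `(-1/2, 1/2) × Ω` under the volume-preserving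
splitting `ℝ³ ≃ ℝ × ℝ²`, so it has the (finite) measure of `Ω`.
-/

open MeasureTheory Matrix Set

attribute [local instance] Matrix.frobeniusNormedAddCommGroup

/-- The set of special orthogonal `3×3` real matrices. -/
def SO3 : Set (Matrix (Fin 3) (Fin 3) ℝ) := {R | Rᵀ * R = 1 ∧ R.det = 1}

/-- The unit-thickness domain `Ω¹ = Ω × (−1/2, 1/2)`, points written `x = (x', x₃)`. -/
def Omega1 (Ω : Set (Fin 2 → ℝ)) : Set (Fin 3 → ℝ) :=
  {x | ![x 0, x 1] ∈ Ω ∧ x 2 ∈ Ioo (-(1 : ℝ) / 2) (1 / 2)}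

open Metric
open scoped Ring

attribute [local instance] Matrix.frobeniusNormSMulClass

section NormedRing

variable {R : Type*} [NormedRing R] {a b : R}

theorem IsUnit.add_of_norm_inverse_mul_lt_one [HasSummableGeomSeries R] (ha : IsUnit a)
    (hab : ‖a⁻¹ʳ‖ * ‖b‖ < 1) : IsUnit (a + b) := by
  nontriviality R
  obtain ⟨u, rfl⟩ := ha
  rw [Ring.inverse_unit] at hab
  have hpos : 0 < ‖(↑u⁻¹ : R)‖ := Units.norm_pos u⁻¹
  exact (u.add b (by rwa [← one_div, lt_div_iff₀' hpos])).isUnit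

theorem norm_inverse_sub_inverse_add_le (ha : IsUnit a) (hab : IsUnit (a + b)) :
    ‖a⁻¹ʳ - (a + b)⁻¹ʳ‖ ≤ ‖a⁻¹ʳ‖ * ‖b‖ * ‖(a + b)⁻¹ʳ‖ := by
  rw [Ring.inverse_sub_inverse (iff_of_true ha hab), add_sub_cancel_left]
  exact norm_mul₃_le

variable [HasSummableGeomSeries R]

theorem norm_inverse_add_le (ha : IsUnit a) (hab : ‖a⁻¹ʳ‖ * ‖b‖ ≤ 1 / 2) :
    ‖(a + b)⁻¹ʳ‖ ≤ 2 * ‖a⁻¹ʳ‖ := by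
  have hsub : ‖a⁻¹ʳ - (a + b)⁻¹ʳ‖ ≤ 1 / 2 * ‖(a + b)⁻¹ʳ‖ :=
    (norm_inverse_sub_inverse_add_le ha (ha.add_of_norm_inverse_mul_lt_one (by linarith))).trans
      (by gcongr)
  linarith [norm_le_insert a⁻¹ʳ (a + b)⁻¹ʳ]

theorem norm_mul_inverse_sub_mul_inverse_add_le (f : R) (ha : IsUnit a)
    (hab : ‖a⁻¹ʳ‖ * ‖b‖ ≤ 1 / 2) :
    ‖f * a⁻¹ʳ - f * (a + b)⁻¹ʳ‖ ≤ 2 * (‖f‖ * ‖a⁻¹ʳ‖ ^ 2 * ‖b‖) := by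
  have hsub := norm_inverse_sub_inverse_add_le ha (ha.add_of_norm_inverse_mul_lt_one (by linarith))
  have hinv := norm_inverse_add_le ha hab
  calc ‖f * a⁻¹ʳ - f * (a + b)⁻¹ʳ‖ ≤ ‖f‖ * ‖a⁻¹ʳ - (a + b)⁻¹ʳ‖ := by
        rw [← mul_sub]; exact norm_mul_le _ _
    _ ≤ ‖f‖ * (‖a⁻¹ʳ‖ * ‖b‖ * (2 * ‖a⁻¹ʳ‖)) := by gcongr; exact hsub.trans (by gcongr)
    _ = 2 * (‖f‖ * ‖a⁻¹ʳ‖ ^ 2 * ‖b‖) := by ring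

end NormedRing

theorem Metric.infDist_sq_le {α : Type*} [PseudoMetricSpace α] (x y : α) (s : Set α) :
    infDist x s ^ 2 ≤ 2 * infDist y s ^ 2 + 2 * dist x y ^ 2 := by
  calc infDist x s ^ 2 ≤ (infDist y s + dist x y) ^ 2 :=
        pow_le_pow_left₀ infDist_nonneg (infDist_le_infDist_add_dist) 2
    _ ≤ 2 * infDist y s ^ 2 + 2 * dist x y ^ 2 := by
        linarith [add_sq_le (a := infDist y s) (b := dist x y)]

theorem infDist_mul_inverse_sq_le {R : Type*} [NormedRing R] [HasSummableGeomSeries R]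
    {a b : R} (S : Set R) (f : R) (ha : IsUnit a) (hab : ‖a⁻¹ʳ‖ * ‖b‖ ≤ 1 / 2) :
    infDist (f * a⁻¹ʳ) S ^ 2 ≤
      2 * infDist (f * (a + b)⁻¹ʳ) S ^ 2 + 8 * (‖f‖ * ‖a⁻¹ʳ‖ ^ 2 * ‖b‖) ^ 2 := by
  have hdist : dist (f * a⁻¹ʳ) (f * (a + b)⁻¹ʳ) ^ 2 ≤ (2 * (‖f‖ * ‖a⁻¹ʳ‖ ^ 2 * ‖b‖)) ^ 2 :=
    pow_le_pow_left₀ dist_nonneg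
      (by rw [dist_eq_norm]; exact norm_mul_inverse_sub_mul_inverse_add_le f ha hab) 2
  linarith [infDist_sq_le (f * a⁻¹ʳ) (f * (a + b)⁻¹ʳ) S]

theorem MeasureTheory.MemLp.integrable_infDist_sq {X E : Type*} [MeasurableSpace X]
    {μ : Measure X} [IsFiniteMeasure μ] [NormedAddCommGroup E] {S : Set E} {z : E} (hz : z ∈ S)
    {G : X → E} (hG : MemLp G 2 μ) : Integrable (fun x => infDist (G x) S ^ 2) μ := by
  refine ((hG.sub (memLp_const z)).integrable_norm_pow' (p := 2)).mono'
    (((continuous_infDist_pt S).pow 2).comp_aestronglyMeasurable hG.1) ?_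
  refine ae_of_all _ fun x => ?_
  rw [Real.norm_of_nonneg (sq_nonneg _), Pi.sub_apply, ← dist_eq_norm]
  exact pow_le_pow_left₀ infDist_nonneg (infDist_le_dist_of_mem hz) 2

namespace Matrix

instance instMeasurableSpace {m n α : Type*} [MeasurableSpace α] :
    MeasurableSpace (Matrix m n α) :=
  MeasurableSpace.pi

instance instBorelSpace {m n α : Type*} [Countable m] [Countable n] [TopologicalSpace α]
    [MeasurableSpace α] [SecondCountableTopology α] [BorelSpace α] :
    BorelSpace (Matrix m n α) :=
  Pi.borelSpace

instance instSecondCountableTopology {m n α : Type*} [Countable m] [Countable n]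
    [TopologicalSpace α] [SecondCountableTopology α] : SecondCountableTopology (Matrix m n α) :=
  inferInstanceAs (SecondCountableTopology (m → n → α))

theorem measurable_of_measurable_entries {X m n α : Type*} [MeasurableSpace X]
    [MeasurableSpace α] {f : X → Matrix m n α} (hf : ∀ i j, Measurable fun x => f x i j) :
    Measurable f :=
  measurable_pi_iff.2 fun i => measurable_pi_iff.2 (hf i)

variable {n : Type*} [Fintype n] [DecidableEq n]

theorem measurable_inv : Measurable fun A : Matrix n n ℝ => A⁻¹ := by
  simp only [inv_def, Ring.inverse_eq_inv']
  exact continuous_id.matrix_det.measurable.inv.smul continuous_id.matrix_adjugate.measurable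

section Frobenius

attribute [local instance] frobeniusNormedRing

variable {X : Type*} [MeasurableSpace X] {μ : Measure X} {A P F : X → Matrix n n ℝ} {M ε : ℝ}

-- The Frobenius uniformity is the product one only up to unfolding, so instance search cannot
-- see completeness through `frobeniusNormedRing` on its own.
theorem hasSummableGeomSeries_frobenius : HasSummableGeomSeries (Matrix n n ℝ) :=
  @instHasSummableGeomSeriesOfCompleteSpace _ _
    (show CompleteSpace (Matrix n n ℝ) from inferInstance)

attribute [local instance] hasSummableGeomSeries_frobenius

theorem ae_isUnit_add (hA : ∀ᵐ x ∂μ, IsUnit (A x) ∧ ‖(A x)⁻¹‖ ≤ M)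
    (hP : ∀ᵐ x ∂μ, ‖P x‖ ≤ ε) (hMε : M * ε < 1) : ∀ᵐ x ∂μ, IsUnit (A x + P x) := by
  filter_upwards [hA, hP] with x ⟨hunit, hAM⟩ hPε
  rw [nonsing_inv_eq_ringInverse] at hAM
  exact hunit.add_of_norm_inverse_mul_lt_one
    ((mul_le_mul hAM hPε (norm_nonneg _) ((norm_nonneg _).trans hAM)).trans_lt hMε)

theorem integral_infDist_mul_inv_sq_le [IsFiniteMeasure μ] {S : Set (Matrix n n ℝ)} (hS : 1 ∈ S)
    (hAP : Measurable fun x => A x + P x) (hF : MemLp F 2 μ)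
    (hA : ∀ᵐ x ∂μ, IsUnit (A x) ∧ ‖(A x)⁻¹‖ ≤ M) (hP : ∀ᵐ x ∂μ, ‖P x‖ ≤ ε) (hMε : M * ε ≤ 1 / 2) :
    ∫ x, infDist (F x * (A x)⁻¹) S ^ 2 ∂μ ≤
      2 * ∫ x, infDist (F x * (A x + P x)⁻¹) S ^ 2 ∂μ + 8 * M ^ 4 * ε ^ 2 * ∫ x, ‖F x‖ ^ 2 ∂μ := by
  have hpt : ∀ᵐ x ∂μ, ‖F x * (A x + P x)⁻¹‖ ≤ 2 * M * ‖F x‖ ∧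
      infDist (F x * (A x)⁻¹) S ^ 2 ≤
        2 * infDist (F x * (A x + P x)⁻¹) S ^ 2 + 8 * M ^ 4 * ε ^ 2 * ‖F x‖ ^ 2 := by
    filter_upwards [hA, hP] with x ⟨hunit, hAM⟩ hPε
    simp only [nonsing_inv_eq_ringInverse] at hAM ⊢
    have hab : ‖(A x)⁻¹ʳ‖ * ‖P x‖ ≤ 1 / 2 :=
      (mul_le_mul hAM hPε (norm_nonneg _) ((norm_nonneg _).trans hAM)).trans hMε
    constructor
    · calc ‖F x * (A x + P x)⁻¹ʳ‖ ≤ ‖F x‖ * (2 * ‖(A x)⁻¹ʳ‖) :=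
            (norm_mul_le _ _).trans (by gcongr; exact norm_inverse_add_le hunit hab)
        _ ≤ 2 * M * ‖F x‖ := by nlinarith [norm_nonneg (F x)]
    · calc _ ≤ 2 * infDist (F x * (A x + P x)⁻¹ʳ) S ^ 2 +
              8 * (‖F x‖ * ‖(A x)⁻¹ʳ‖ ^ 2 * ‖P x‖) ^ 2 :=
            infDist_mul_inverse_sq_le S (F x) hunit hab
        _ ≤ 2 * infDist (F x * (A x + P x)⁻¹ʳ) S ^ 2 + 8 * (‖F x‖ * M ^ 2 * ε) ^ 2 := by gcongr
        _ = _ := by ring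
  have hFs : MemLp (fun x => F x * (A x + P x)⁻¹) 2 μ :=
    hF.of_le_mul (hF.1.mul (measurable_inv.comp hAP).aestronglyMeasurable)
      (hpt.mono fun x hx => hx.1)
  have hds := (hFs.integrable_infDist_sq hS).const_mul 2
  have hF2 := (hF.integrable_norm_pow' (p := 2)).const_mul (8 * M ^ 4 * ε ^ 2)
  calc ∫ x, infDist (F x * (A x)⁻¹) S ^ 2 ∂μ ≤
        ∫ x, (2 * infDist (F x * (A x + P x)⁻¹) S ^ 2 + 8 * M ^ 4 * ε ^ 2 * ‖F x‖ ^ 2) ∂μ :=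
        integral_mono_of_nonneg (ae_of_all _ fun _ => sq_nonneg _) (hds.add hF2)
          (hpt.mono fun x hx => hx.2)
    _ = _ := by rw [integral_add hds hF2, integral_const_mul, integral_const_mul]

end Frobenius

end Matrix

section Omega1

theorem piFinSuccAbove_two_snd (x : Fin 3 → ℝ) :
    (MeasurableEquiv.piFinSuccAbove (fun _ => ℝ) 2 x).2 = ![x 0, x 1] := by
  ext j; fin_cases j <;> rfl

theorem Omega1_eq_preimage (Ω : Set (Fin 2 → ℝ)) :
    Omega1 Ω =
      MeasurableEquiv.piFinSuccAbove (fun _ => ℝ) 2 ⁻¹' (Ioo (-(1 : ℝ) / 2) (1 / 2) ×ˢ Ω) := by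
  ext x
  simp only [Omega1, mem_ofPred_eq, mem_preimage, mem_prod, piFinSuccAbove_two_snd]
  exact and_comm

theorem measurePreserving_piFinSuccAbove_restrict_Omega1 (Ω : Set (Fin 2 → ℝ)) :
    MeasurePreserving (MeasurableEquiv.piFinSuccAbove (fun _ => ℝ) 2)
      (volume.restrict (Omega1 Ω))
      ((volume.restrict (Ioo (-(1 : ℝ) / 2) (1 / 2))).prod (volume.restrict Ω)) := by
  rw [Measure.prod_restrict, ← Measure.volume_eq_prod, Omega1_eq_preimage]
  exact (volume_preserving_piFinSuccAbove _ 2).restrict_preimage_emb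
    (MeasurableEquiv.measurableEmbedding _) _

theorem volume_Omega1 (Ω : Set (Fin 2 → ℝ)) : volume (Omega1 Ω) = volume Ω := by
  rw [Omega1_eq_preimage, (volume_preserving_piFinSuccAbove (fun _ => ℝ) 2).measure_preimage_equiv,
    Measure.volume_eq_prod, Measure.prod_prod, Real.volume_Ioo]
  norm_num

theorem ae_restrict_Omega1 {Ω : Set (Fin 2 → ℝ)} {p : (Fin 2 → ℝ) → Prop}
    (hp : ∀ᵐ x' ∂volume.restrict Ω, p x') : ∀ᵐ x ∂volume.restrict (Omega1 Ω), p ![x 0, x 1] := by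
  simpa only [Function.comp_apply, piFinSuccAbove_two_snd] using
    (Measure.quasiMeasurePreserving_snd.comp
      (measurePreserving_piFinSuccAbove_restrict_Omega1 Ω).quasiMeasurePreserving).ae hp

end Omega1

theorem stmt12_general (M K₁ K₂ : ℝ) (hM : 0 < M) (hK₂ : 0 < K₂) :
    ∃ h₀ > (0 : ℝ), ∃ C > (0 : ℝ),
    ∀ Ω : Set (Fin 2 → ℝ), IsOpen Ω → Bornology.IsBounded Ω →
    ∀ Abar : (Fin 2 → ℝ) → Matrix (Fin 3) (Fin 3) ℝ,
      (∀ i j, Measurable fun x' => Abar x' i j) →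
      (∀ᵐ x' ∂volume.restrict Ω,
        ‖Abar x'‖ ≤ M ∧ IsUnit (Abar x') ∧ ‖(Abar x')⁻¹‖ ≤ M) →
    ∀ B : (Fin 3 → ℝ) → Matrix (Fin 3) (Fin 3) ℝ,
      (∀ i j, Measurable fun x => B x i j) →
      (∀ᵐ x ∂volume.restrict (Omega1 Ω), ‖B x‖ ≤ K₂) →
    ∀ h : ℝ, 0 < h → h < h₀ →
    ∀ F : (Fin 3 → ℝ) → Matrix (Fin 3) (Fin 3) ℝ,
      MemLp F 2 (volume.restrict (Omega1 Ω)) →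
      (∫ x in Omega1 Ω, ‖F x‖ ^ 2) ≤ K₁ ^ 2 →
    (∀ᵐ x ∂volume.restrict (Omega1 Ω), IsUnit (Abar ![x 0, x 1] + h • B x)) ∧
    ∫ x in Omega1 Ω, Metric.infDist (F x * (Abar ![x 0, x 1])⁻¹) SO3 ^ 2 ≤
      C * (h ^ 2 +
        ∫ x in Omega1 Ω,
          Metric.infDist (F x * (Abar ![x 0, x 1] + h • B x)⁻¹) SO3 ^ 2) := by
  refine ⟨1 / (2 * M * K₂), by positivity, 2 + 8 * M ^ 4 * K₂ ^ 2 * K₁ ^ 2, by positivity, ?_⟩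
  intro Ω _ hΩ Abar hAbar hAbar_bd B hB hB_bd h hh hh₀ F hF hFK₁
  have : IsFiniteMeasure (volume.restrict (Omega1 Ω)) :=
    isFiniteMeasure_restrict.2 (volume_Omega1 Ω ▸ hΩ.measure_lt_top.ne)
  have hA := ae_restrict_Omega1 (hAbar_bd.mono fun _ hx => hx.2)
  have hP : ∀ᵐ x ∂volume.restrict (Omega1 Ω), ‖h • B x‖ ≤ h * K₂ :=
    hB_bd.mono fun x hx => by rw [norm_smul, Real.norm_of_nonneg hh.le]; gcongr
  have hMε : M * (h * K₂) ≤ 1 / 2 := by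
    rw [lt_div_iff₀ (by positivity)] at hh₀; nlinarith
  have hmeas : Measurable fun x : Fin 3 → ℝ => Abar ![x 0, x 1] + h • B x :=
    ((Matrix.measurable_of_measurable_entries hAbar).comp (by fun_prop)).add
      ((Matrix.measurable_of_measurable_entries hB).const_smul h)
  have hSO3 : (1 : Matrix (Fin 3) (Fin 3) ℝ) ∈ SO3 := ⟨by simp, by simp⟩
  refine ⟨Matrix.ae_isUnit_add hA hP (by linarith), ?_⟩
  have hint := Matrix.integral_infDist_mul_inv_sq_le hSO3 hmeas hF hA hP hMε
  have hdist : 0 ≤ ∫ x in Omega1 Ω,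
      Metric.infDist (F x * (Abar ![x 0, x 1] + h • B x)⁻¹) SO3 ^ 2 :=
    integral_nonneg fun _ => sq_nonneg _
  nlinarith [mul_le_mul_of_nonneg_left hFK₁ (by positivity : 0 ≤ 8 * M ^ 4 * (h * K₂) ^ 2),
    mul_nonneg (by positivity : 0 ≤ 8 * M ^ 4 * K₂ ^ 2 * K₁ ^ 2) hdist]

/-- **Estimate (16) of Section 3.1 of the paper.** For `A^h = Ā + hB` with `Ā, Ā⁻¹`
bounded by `M` and `‖B‖_{L^∞} ≤ K₂`, there are `h₀, C > 0` depending only on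
`M, K₁, K₂` such that for `0 < h < h₀` and every `F ∈ L²` with `‖F‖_{L²} ≤ K₁`, the
matrix `A^h(x)` is invertible for a.e. `x`, and
`∫ dist²(F·Ā⁻¹, SO(3)) ≤ C (h² + ∫ dist²(F·(A^h)⁻¹, SO(3)))`. -/
theorem stmt12 (M K₁ K₂ : ℝ) (hM : 0 < M) (hK₁ : 0 < K₁) (hK₂ : 0 < K₂) :
    ∃ h₀ > (0 : ℝ), ∃ C > (0 : ℝ),
    ∀ Ω : Set (Fin 2 → ℝ), IsOpen Ω → Bornology.IsBounded Ω →
    ∀ Abar : (Fin 2 → ℝ) → Matrix (Fin 3) (Fin 3) ℝ,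
      (∀ i j, Measurable fun x' => Abar x' i j) →
      (∀ᵐ x' ∂volume.restrict Ω,
        ‖Abar x'‖ ≤ M ∧ IsUnit (Abar x') ∧ ‖(Abar x')⁻¹‖ ≤ M) →
    ∀ B : (Fin 3 → ℝ) → Matrix (Fin 3) (Fin 3) ℝ,
      (∀ i j, Measurable fun x => B x i j) →
      (∀ᵐ x ∂volume.restrict (Omega1 Ω), ‖B x‖ ≤ K₂) →
    ∀ h : ℝ, 0 < h → h < h₀ →
    ∀ F : (Fin 3 → ℝ) → Matrix (Fin 3) (Fin 3) ℝ,
      MemLp F 2 (volume.restrict (Omega1 Ω)) →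
      (∫ x in Omega1 Ω, ‖F x‖ ^ 2) ≤ K₁ ^ 2 →
    (∀ᵐ x ∂volume.restrict (Omega1 Ω), IsUnit (Abar ![x 0, x 1] + h • B x)) ∧
    ∫ x in Omega1 Ω, Metric.infDist (F x * (Abar ![x 0, x 1])⁻¹) SO3 ^ 2 ≤
      C * (h ^ 2 +
        ∫ x in Omega1 Ω,
          Metric.infDist (F x * (Abar ![x 0, x 1] + h • B x)⁻¹) SO3 ^ 2) :=
  stmt12_general M K₁ K₂ hM hK₂
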